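/- Let b and b′ be zigzag paths with b(1) = b′(1). There exists a continuous map K : [0,1] × [0,1] → [0,1] with K(−,0) = b, K(−,1) = b′, K(0,t) = 0 and K(1,t) = b(1) for all t, such that every intermediate path K(−,t) is a zigzag path, if and only if b and b′ have the same length. (This is the content of Theorem 1.7: the projection p : c₂𝕊¹ → c𝕀∼ induces an isomorphism of fundamental categories, so the 2-equivalence class of a controlled path of c𝕀∼ starting at 0 is determined exactly by its length.) -/

import Mathlib

/-!
Within distance `1/2` of a zigzag path of length `n`, every zigzag path has length at least `n`:
its values at the nodes of the first path alternate around `1/2`, and a monotone segment of the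
second path can accommodate only one change of side. Along a homotopy through zigzag paths the
slices are uniformly close for nearby times (compactness of the square), so the length is locally
constant in time, hence constant on the connected interval `[0,1]`.

Conversely, given zigzag paths `b`, `b'` of the same length with node sequences `a`, `a'`,
reparametrize both piecewise linearly so that at time `t` their nodes sit at `(1 - t) a + t a'`.
Zigzag paths with common nodes are closed under convex combination, so
`(1 - t) b ∘ ρₜ + t b' ∘ ρ'ₜ` is a zigzag path for every `t`.
-/

open Set

/-- A continuous map `b : [0,1] → [0,1]` is a *zigzag path of length `n`* (see Context). -/
def IsZigzag (b : ℝ → ℝ) (n : ℕ) : Prop :=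
  ContinuousOn b (Icc 0 1) ∧ (∀ t ∈ Icc (0:ℝ) 1, b t ∈ Icc (0:ℝ) 1) ∧
  ((n = 0 ∧ ∀ t ∈ Icc (0:ℝ) 1, b t = 0) ∨
   (1 ≤ n ∧ ∃ t : ℕ → ℝ, t 0 = 0 ∧ t n = 1 ∧
     (∀ i < n, t i < t (i + 1)) ∧
     (∀ i ≤ n, b (t i) = if Odd i then 1 else 0) ∧
     (∀ i, 1 ≤ i → i ≤ n →
       if Odd i then MonotoneOn b (Icc (t (i - 1)) (t i))
       else AntitoneOn b (Icc (t (i - 1)) (t i)))))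

structure IsSubdivision (u : ℕ → ℝ) (n : ℕ) : Prop where
  zero : u 0 = 0
  last : u n = 1
  lt_succ : ∀ i < n, u i < u (i + 1)

section IsSubdivision

variable {u : ℕ → ℝ} {n : ℕ}

theorem IsSubdivision.strictMonoOn (hu : IsSubdivision u n) :
    StrictMonoOn u (Iic n) :=
  strictMonoOn_Iic_of_lt_succ hu.lt_succ

theorem IsSubdivision.mem_Icc (hu : IsSubdivision u n) {j : ℕ} (hj : j ≤ n) :
    u j ∈ Icc (0:ℝ) 1 := by
  rw [← hu.zero, ← hu.last]
  exact ⟨hu.strictMonoOn.monotoneOn n.zero_le hj j.zero_le,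
    hu.strictMonoOn.monotoneOn hj (le_refl n) hj⟩

theorem IsSubdivision.one_le (hu : IsSubdivision u n) : 1 ≤ n := by
  by_contra! hn
  have := hu.last
  rw [Nat.lt_one_iff.1 hn, hu.zero] at this
  exact zero_ne_one this

theorem IsSubdivision.convex_comb {a a' : ℕ → ℝ} (ha : IsSubdivision a n)
    (ha' : IsSubdivision a' n) {t : ℝ} (ht : t ∈ Icc (0:ℝ) 1) :
    IsSubdivision (fun i => (1 - t) * a i + t * a' i) n where
  zero := by simp [ha.zero, ha'.zero]
  last := by simp [ha.last, ha'.last]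
  lt_succ i hi := by
    have hd := sub_pos.2 (ha.lt_succ i hi)
    have hd' := sub_pos.2 (ha'.lt_succ i hi)
    set d := a (i + 1) - a i
    set d' := a' (i + 1) - a' i
    nlinarith [mul_nonneg (sub_nonneg.2 ht.2) (sub_nonneg.2 (min_le_left d d')),
      mul_nonneg ht.1 (sub_nonneg.2 (min_le_right d d')), lt_min hd hd']

end IsSubdivision

structure IsZigzagAt (b : ℝ → ℝ) (n : ℕ) (u : ℕ → ℝ) : Prop where
  subdivision : IsSubdivision u n
  continuousOn : ContinuousOn b (Icc 0 1)
  mapsTo : MapsTo b (Icc 0 1) (Icc 0 1)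
  apply_node : ∀ i ≤ n, b (u i) = if Odd i then 1 else 0
  monotoneOn_segment : ∀ i, 1 ≤ i → i ≤ n →
    if Odd i then MonotoneOn b (Icc (u (i - 1)) (u i)) else AntitoneOn b (Icc (u (i - 1)) (u i))

theorem isZigzag_iff {b : ℝ → ℝ} {n : ℕ} :
    IsZigzag b n ↔ (n = 0 ∧ ∀ s ∈ Icc (0:ℝ) 1, b s = 0) ∨ (1 ≤ n ∧ ∃ u, IsZigzagAt b n u) := by
  constructor
  · rintro ⟨hc, hmaps, ⟨hn, hb⟩ | ⟨hn, u, h0, hlast, hlt, hnode, hseg⟩⟩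
    · exact .inl ⟨hn, hb⟩
    · exact .inr ⟨hn, u, ⟨h0, hlast, hlt⟩, hc, hmaps, hnode, hseg⟩
  · rintro (⟨rfl, hb⟩ | ⟨hn, u, ⟨h0, hlast, hlt⟩, hc, hmaps, hnode, hseg⟩)
    · refine ⟨continuousOn_const.congr hb, fun s hs => ?_, .inl ⟨rfl, hb⟩⟩
      rw [hb s hs]
      exact ⟨le_rfl, zero_le_one⟩
    · exact ⟨hc, hmaps, .inr ⟨hn, u, h0, hlast, hlt, hnode, hseg⟩⟩

section IsZigzagAt

variable {b c : ℝ → ℝ} {n : ℕ} {u v : ℕ → ℝ}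

theorem IsZigzagAt.isZigzag (hb : IsZigzagAt b n u) : IsZigzag b n :=
  isZigzag_iff.2 (.inr ⟨hb.subdivision.one_le, u, hb⟩)

theorem IsZigzagAt.apply_zero (hb : IsZigzagAt b n u) : b 0 = 0 := by
  simpa [hb.subdivision.zero] using hb.apply_node 0 n.zero_le

theorem IsZigzagAt.apply_one (hb : IsZigzagAt b n u) : b 1 = if Odd n then 1 else 0 := by
  simpa [hb.subdivision.last] using hb.apply_node n le_rfl

end IsZigzagAt

def AlternatesAt (c : ℝ → ℝ) (x : ℕ → ℝ) (n : ℕ) : Prop :=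
  ∀ j ≤ n, if Odd j then 1 / 2 < c (x j) else c (x j) < 1 / 2

section Rigidity

variable {c : ℝ → ℝ} {m : ℕ} {u : ℕ → ℝ}

/-- Consecutive alternation points cannot share a monotone segment of a zigzag path. -/
theorem IsZigzagAt.lt_of_alternate (hc : IsZigzagAt c m u) {j : ℕ} (hj : j ≤ m) {x y : ℝ}
    (hx : u (j - 1) ≤ x) (hxy : x < y)
    (hcx : if Odd j then 1 / 2 < c x else c x < 1 / 2)
    (hcy : if Odd j then c y < 1 / 2 else 1 / 2 < c y) : u j < y := by
  by_contra! hy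
  rcases Nat.eq_zero_or_pos j with rfl | hj1
  · exact hxy.not_ge (hy.trans hx)
  have hxI : x ∈ Icc (u (j - 1)) (u j) := ⟨hx, hxy.le.trans hy⟩
  have hyI : y ∈ Icc (u (j - 1)) (u j) := ⟨hx.trans hxy.le, hy⟩
  have hseg := hc.monotoneOn_segment j hj1 hj
  split_ifs at hseg hcx hcy
  · linarith [hseg hxI hyI hxy.le]
  · linarith [hseg hxI hyI hxy.le]

theorem IsZigzagAt.le_of_alternatesAt (hc : IsZigzagAt c m u) {n : ℕ} {x : ℕ → ℝ}
    (hx0 : 0 ≤ x 0) (hx1 : ∀ j ≤ n, x j ≤ 1) (hx : ∀ j < n, x j < x (j + 1))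
    (halt : AlternatesAt c x n) : n ≤ m := by
  suffices h : ∀ j ≤ n, j ≤ m ∧ u (j - 1) ≤ x j from (h n le_rfl).1
  intro j
  induction j with
  | zero => exact fun _ => ⟨m.zero_le, hc.subdivision.zero.trans_le hx0⟩
  | succ j ih =>
    intro hjn
    obtain ⟨hjm, hux⟩ := ih (by omega)
    have hcy := halt (j + 1) hjn
    simp only [Nat.odd_add_one, ite_not] at hcy
    have hlt := hc.lt_of_alternate hjm hux (hx j hjn) (halt j (by omega)) hcy
    refine ⟨?_, hlt.le⟩
    by_contra! hmj
    have : j = m := by omega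
    subst this
    linarith [hc.subdivision.last, hx1 (j + 1) hjn]

theorem IsZigzag.le_of_alternatesAt (hc : IsZigzag c m) {n : ℕ} {x : ℕ → ℝ}
    (hx0 : 0 ≤ x 0) (hx1 : ∀ j ≤ n, x j ≤ 1) (hx : ∀ j < n, x j < x (j + 1))
    (halt : AlternatesAt c x n) : n ≤ m := by
  rcases isZigzag_iff.1 hc with ⟨rfl, hc0⟩ | ⟨-, u, hu⟩
  · by_contra! hn
    have h1 := halt 1 hn
    rw [if_pos odd_one, hc0 _ ⟨hx0.trans (hx 0 hn).le, hx1 1 hn⟩] at h1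
    norm_num at h1
  · exact hu.le_of_alternatesAt hx0 hx1 hx halt

theorem IsZigzag.le_of_abs_sub_lt {b : ℝ → ℝ} {n : ℕ} (hb : IsZigzag b n) (hc : IsZigzag c m)
    (hbc : ∀ s ∈ Icc (0:ℝ) 1, |b s - c s| < 1 / 2) : n ≤ m := by
  rcases isZigzag_iff.1 hb with ⟨rfl, -⟩ | ⟨-, t, ht⟩
  · exact m.zero_le
  refine hc.le_of_alternatesAt (ht.subdivision.mem_Icc n.zero_le).1
    (fun j hj => (ht.subdivision.mem_Icc hj).2) ht.subdivision.lt_succ fun j hj => ?_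
  have hnode := ht.apply_node j hj
  have hclose := abs_lt.1 (hbc (t j) (ht.subdivision.mem_Icc hj))
  split_ifs at hnode ⊢ <;> linarith [hclose.1, hclose.2]

theorem IsZigzag.length_eq_of_abs_sub_lt {b : ℝ → ℝ} {n : ℕ} (hb : IsZigzag b n)
    (hc : IsZigzag c m) (hbc : ∀ s ∈ Icc (0:ℝ) 1, |b s - c s| < 1 / 2) : n = m :=
  (hb.le_of_abs_sub_lt hc hbc).antisymm
    (hc.le_of_abs_sub_lt hb fun s hs => abs_sub_comm (b s) (c s) ▸ hbc s hs)

end Rigidity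

theorem IsPreconnected.constant_of_forall_dist_lt {X Y : Type*} [PseudoMetricSpace X]
    [TopologicalSpace Y] [DiscreteTopology Y] {S : Set X} (hS : IsPreconnected S) {f : X → Y}
    {δ : ℝ} (hδ : 0 < δ) (hf : ∀ x ∈ S, ∀ y ∈ S, dist x y < δ → f x = f y)
    {x y : X} (hx : x ∈ S) (hy : y ∈ S) : f x = f y := by
  refine hS.constant (fun z hz => ?_) hx hy
  refine tendsto_const_nhds.congr' ?_
  filter_upwards [inter_mem_nhdsWithin S (Metric.ball_mem_nhds z hδ), self_mem_nhdsWithin]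
    with w hw hwS
  exact hf z hz w hwS (by rw [dist_comm]; exact hw.2)

theorem IsCompact.exists_forall_abs_sub_lt {S T : Set ℝ} (hS : IsCompact S) (hT : IsCompact T)
    {K : ℝ → ℝ → ℝ} (hK : ContinuousOn (fun p : ℝ × ℝ => K p.1 p.2) (S ×ˢ T)) {ε : ℝ}
    (hε : 0 < ε) : ∃ δ > 0, ∀ t₁ ∈ T, ∀ t₂ ∈ T, dist t₁ t₂ < δ → ∀ s ∈ S, |K s t₁ - K s t₂| < ε := by
  obtain ⟨δ, hδ, hK⟩ :=
    Metric.uniformContinuousOn_iff.1 ((hS.prod hT).uniformContinuousOn_of_continuous hK) ε hε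
  refine ⟨δ, hδ, fun t₁ ht₁ t₂ ht₂ ht s hs => ?_⟩
  have := hK (s, t₁) ⟨hs, ht₁⟩ (s, t₂) ⟨hs, ht₂⟩ (by simpa [Prod.dist_eq] using ht)
  rwa [Real.dist_eq] at this

def IsZigzagHomotopy (K : ℝ → ℝ → ℝ) (b b' : ℝ → ℝ) : Prop :=
  ContinuousOn (fun p : ℝ × ℝ => K p.1 p.2) (Icc 0 1 ×ˢ Icc 0 1) ∧
  (∀ s ∈ Icc (0:ℝ) 1, K s 0 = b s) ∧
  (∀ s ∈ Icc (0:ℝ) 1, K s 1 = b' s) ∧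
  (∀ t ∈ Icc (0:ℝ) 1, K 0 t = 0) ∧
  (∀ t ∈ Icc (0:ℝ) 1, K 1 t = b 1) ∧
  (∀ t ∈ Icc (0:ℝ) 1, ∃ m, IsZigzag (fun s => K s t) m)

theorem IsZigzagHomotopy.length_eq {K : ℝ → ℝ → ℝ} {b b' : ℝ → ℝ} {n n' : ℕ}
    (hK : IsZigzagHomotopy K b b') (hb : IsZigzag b n) (hb' : IsZigzag b' n') : n = n' := by
  obtain ⟨hKc, hK0, hK1, -, -, hKz⟩ := hK
  obtain ⟨δ, hδ, hclose⟩ := isCompact_Icc.exists_forall_abs_sub_lt isCompact_Icc hKc one_half_pos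
  have : ∀ t, ∃ m, t ∈ Icc (0:ℝ) 1 → IsZigzag (fun s => K s t) m := fun t =>
    if ht : t ∈ Icc (0:ℝ) 1 then (hKz t ht).imp fun _ h _ => h else ⟨0, fun h => absurd h ht⟩
  choose len hlen using this
  have h0 : (0:ℝ) ∈ Icc (0:ℝ) 1 := left_mem_Icc.2 zero_le_one
  have h1 : (1:ℝ) ∈ Icc (0:ℝ) 1 := right_mem_Icc.2 zero_le_one
  calc n = len 0 := hb.length_eq_of_abs_sub_lt (hlen 0 h0) fun s hs => by simp [hK0 s hs]
    _ = len 1 := isPreconnected_Icc.constant_of_forall_dist_lt hδ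
        (fun t₁ h₁ t₂ h₂ ht => (hlen t₁ h₁).length_eq_of_abs_sub_lt (hlen t₂ h₂)
          (hclose t₁ h₁ t₂ h₂ ht)) h0 h1
    _ = n' := (hlen 1 h1).length_eq_of_abs_sub_lt hb' fun s hs => by simp [hK1 s hs]

section Reparametrization

variable {b c : ℝ → ℝ} {n : ℕ} {u v : ℕ → ℝ}

theorem IsZigzagAt.comp_monotone {ρ : ℝ → ℝ} (hb : IsZigzagAt b n v) (hu : IsSubdivision u n)
    (hρ : Monotone ρ) (hρc : ContinuousOn ρ (Icc 0 1)) (hρu : ∀ i ≤ n, ρ (u i) = v i) :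
    IsZigzagAt (b ∘ ρ) n u := by
  have hmaps : ∀ i j, i ≤ j → j ≤ n → MapsTo ρ (Icc (u i) (u j)) (Icc (v i) (v j)) :=
    fun i j hij hj s hs => by
      rw [← hρu i (hij.trans hj), ← hρu j hj]
      exact ⟨hρ hs.1, hρ hs.2⟩
  have h01 : MapsTo ρ (Icc 0 1) (Icc 0 1) := by
    simpa only [hu.zero, hu.last, hb.subdivision.zero, hb.subdivision.last]
      using hmaps 0 n n.zero_le le_rfl
  refine ⟨hu, hb.continuousOn.comp hρc h01, hb.mapsTo.comp h01, fun i hi => ?_,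
    fun i hi1 hi2 => ?_⟩
  · rw [Function.comp_apply, hρu i hi, hb.apply_node i hi]
  · have hseg := hb.monotoneOn_segment i hi1 hi2
    have hmapsi := hmaps (i - 1) i (Nat.sub_le i 1) hi2
    split_ifs at hseg ⊢
    · exact hseg.comp (hρ.monotoneOn _) hmapsi
    · exact hseg.comp_MonotoneOn (hρ.monotoneOn _) hmapsi

theorem IsZigzagAt.convex_comb (hb : IsZigzagAt b n u) (hc : IsZigzagAt c n u) {t : ℝ}
    (ht : t ∈ Icc (0:ℝ) 1) : IsZigzagAt (fun s => (1 - t) * b s + t * c s) n u := by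
  have h1t : 0 ≤ 1 - t := sub_nonneg.2 ht.2
  refine ⟨hb.subdivision, (continuousOn_const.mul hb.continuousOn).add
    (continuousOn_const.mul hc.continuousOn), fun s hs => ?_, fun i hi => ?_,
    fun i hi1 hi2 => ?_⟩
  · simpa only [smul_eq_mul] using
      convex_Icc (0:ℝ) 1 (hb.mapsTo hs) (hc.mapsTo hs) h1t ht.1 (sub_add_cancel 1 t)
  · rw [hb.apply_node i hi, hc.apply_node i hi]
    split_ifs <;> ring
  · have hbi := hb.monotoneOn_segment i hi1 hi2
    have hci := hc.monotoneOn_segment i hi1 hi2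
    split_ifs at hbi hci ⊢
    · exact fun x hx y hy hxy => add_le_add (mul_le_mul_of_nonneg_left (hbi hx hy hxy) h1t)
        (mul_le_mul_of_nonneg_left (hci hx hy hxy) ht.1)
    · exact fun x hx y hy hxy => add_le_add (mul_le_mul_of_nonneg_left (hbi hx hy hxy) h1t)
        (mul_le_mul_of_nonneg_left (hci hx hy hxy) ht.1)

end Reparametrization

/-- The piecewise linear map sending `u i` to `v i - v 0` for `i ≤ n`, provided `u` is strictly
increasing on `{0, …, n}`; it is constant outside `[u 0, u n]`. -/
noncomputable def linInterp (u v : ℕ → ℝ) (n : ℕ) (s : ℝ) : ℝ :=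
  ∑ i ∈ Finset.range n, (v (i + 1) - v i) / (u (i + 1) - u i) * (min s (u (i + 1)) - min s (u i))

theorem monotone_min_sub_min {x y : ℝ} (hyx : y ≤ x) : Monotone fun s => min s x - min s y := by
  intro s s' hss
  simp only [min_def]
  split_ifs <;> linarith

section LinInterp

variable {u v : ℕ → ℝ} {n : ℕ}

theorem monotone_linInterp (hu : ∀ i < n, u i < u (i + 1)) (hv : ∀ i < n, v i ≤ v (i + 1)) :
    Monotone (linInterp u v n) := fun _ _ hss =>
  Finset.sum_le_sum fun i hi =>
    have hi := Finset.mem_range.1 hi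
    mul_le_mul_of_nonneg_left (monotone_min_sub_min (hu i hi).le hss)
      (div_nonneg (sub_nonneg.2 (hv i hi)) (sub_pos.2 (hu i hi)).le)

theorem linInterp_apply_of_le (hu : ∀ i < n, u i < u (i + 1)) {k : ℕ} (hk : k ≤ n) :
    linInterp u v n (u k) = v k - v 0 := by
  have hmono := (strictMonoOn_Iic_of_lt_succ hu).monotoneOn
  rw [linInterp, ← Finset.sum_range_add_sum_Ico _ hk, ← Finset.sum_range_sub v k]
  rw [Finset.sum_eq_zero (s := Finset.Ico k n), add_zero]
  · refine Finset.sum_congr rfl fun i hi => ?_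
    have hi := Finset.mem_range.1 hi
    rw [min_eq_right (hmono (show i + 1 ≤ n by omega) hk hi),
      min_eq_right (hmono (show i ≤ n by omega) hk (by omega)),
      div_mul_cancel₀ _ (sub_pos.2 (hu i (by omega))).ne']
  · intro i hi
    have hi := Finset.mem_Ico.1 hi
    rw [min_eq_left (hmono hk hi.2 (by omega)), min_eq_left (hmono hk (show i ≤ n by omega) hi.1),
      sub_self, mul_zero]

theorem linInterp_self (hu : ∀ i < n, u i < u (i + 1)) {s : ℝ} (hs : s ∈ Icc (u 0) (u n)) :
    linInterp u u n s = s - u 0 := by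
  rw [linInterp, Finset.sum_congr rfl fun i hi =>
    by rw [div_self (sub_pos.2 (hu i (Finset.mem_range.1 hi))).ne', one_mul],
    Finset.sum_range_sub (fun i => min s (u i)), min_eq_left hs.2, min_eq_right hs.1]

theorem ContinuousOn.linInterp {X : Type*} [TopologicalSpace X] {U : ℕ → X → ℝ} {σ : X → ℝ}
    {S : Set X} (hU : ∀ i, ContinuousOn (U i) S) (hUne : ∀ i < n, ∀ x ∈ S, U (i + 1) x ≠ U i x)
    (hσ : ContinuousOn σ S) : ContinuousOn (fun x => linInterp (U · x) v n (σ x)) S :=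
  continuousOn_finsetSum _ fun i hi =>
    (continuousOn_const.div ((hU _).sub (hU _))
      fun x hx => sub_ne_zero.2 (hUne i (Finset.mem_range.1 hi) x hx)).mul
    ((hσ.inf (hU _)).sub (hσ.inf (hU _)))

theorem IsSubdivision.linInterp_apply (hu : IsSubdivision u n) (hv : IsSubdivision v n) {k : ℕ}
    (hk : k ≤ n) : linInterp u v n (u k) = v k := by
  rw [linInterp_apply_of_le hu.lt_succ hk, hv.zero, sub_zero]

theorem IsSubdivision.linInterp_mem_Icc (hu : IsSubdivision u n) (hv : IsSubdivision v n) {s : ℝ}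
    (hs : s ∈ Icc (0:ℝ) 1) : linInterp u v n s ∈ Icc (0:ℝ) 1 := by
  have hmono := monotone_linInterp hu.lt_succ fun i hi => (hv.lt_succ i hi).le
  rw [← hu.zero, ← hu.last] at hs
  rw [← hv.zero, ← hv.last, ← hu.linInterp_apply hv n.zero_le, ← hu.linInterp_apply hv le_rfl]
  exact ⟨hmono hs.1, hmono hs.2⟩

theorem IsZigzagAt.comp_linInterp {b : ℝ → ℝ} (hb : IsZigzagAt b n v) (hu : IsSubdivision u n) :
    IsZigzagAt (fun s => b (linInterp u v n s)) n u :=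
  hb.comp_monotone hu (monotone_linInterp hu.lt_succ fun i hi => (hb.subdivision.lt_succ i hi).le)
    (ContinuousOn.linInterp (fun _ => continuousOn_const)
      (fun i hi _ _ => (hu.lt_succ i hi).ne') continuousOn_id)
    fun _ hi => hu.linInterp_apply hb.subdivision hi

end LinInterp

noncomputable def zigzagHomotopy (b b' : ℝ → ℝ) (a a' : ℕ → ℝ) (n : ℕ) (s t : ℝ) : ℝ :=
  (1 - t) * b (linInterp (fun i => (1 - t) * a i + t * a' i) a n s) +
    t * b' (linInterp (fun i => (1 - t) * a i + t * a' i) a' n s)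

section ZigzagHomotopy

variable {b b' : ℝ → ℝ} {a a' : ℕ → ℝ} {n : ℕ}

theorem isZigzagAt_zigzagHomotopy (hb : IsZigzagAt b n a) (hb' : IsZigzagAt b' n a') {t : ℝ}
    (ht : t ∈ Icc (0:ℝ) 1) :
    IsZigzagAt (fun s => zigzagHomotopy b b' a a' n s t) n fun i => (1 - t) * a i + t * a' i :=
  have hu := hb.subdivision.convex_comb hb'.subdivision ht
  (hb.comp_linInterp hu).convex_comb (hb'.comp_linInterp hu) ht

theorem continuousOn_zigzagHomotopy (hb : IsZigzagAt b n a) (hb' : IsZigzagAt b' n a') :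
    ContinuousOn (fun p : ℝ × ℝ => zigzagHomotopy b b' a a' n p.1 p.2) (Icc 0 1 ×ˢ Icc 0 1) := by
  have hu : ∀ p ∈ Icc (0:ℝ) 1 ×ˢ Icc (0:ℝ) 1,
      IsSubdivision (fun i => (1 - p.2) * a i + p.2 * a' i) n :=
    fun p hp => hb.subdivision.convex_comb hb'.subdivision hp.2
  have hρ : ∀ {c v}, IsZigzagAt c n v → ContinuousOn
      (fun p : ℝ × ℝ => c (linInterp (fun i => (1 - p.2) * a i + p.2 * a' i) v n p.1))
      (Icc 0 1 ×ˢ Icc 0 1) := fun hc =>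
    hc.continuousOn.comp
      (ContinuousOn.linInterp (fun _ => by fun_prop) (fun i hi p hp => ((hu p hp).lt_succ i hi).ne')
        continuousOn_fst)
      fun p hp => (hu p hp).linInterp_mem_Icc hc.subdivision hp.1
  exact ((continuousOn_const.sub continuousOn_snd).mul (hρ hb)).add (continuousOn_snd.mul (hρ hb'))

theorem isZigzagHomotopy_zigzagHomotopy (hb : IsZigzagAt b n a) (hb' : IsZigzagAt b' n a') :
    IsZigzagHomotopy (zigzagHomotopy b b' a a' n) b b' := by
  have hself : ∀ {c v}, IsZigzagAt c n v → ∀ s ∈ Icc (0:ℝ) 1, linInterp v v n s = s :=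
    fun hc s hs => by
      rw [linInterp_self hc.subdivision.lt_succ (by rwa [hc.subdivision.zero, hc.subdivision.last]),
        hc.subdivision.zero, sub_zero]
  refine ⟨continuousOn_zigzagHomotopy hb hb', fun s hs => ?_, fun s hs => ?_,
    fun t ht => (isZigzagAt_zigzagHomotopy hb hb' ht).apply_zero,
    fun t ht => ((isZigzagAt_zigzagHomotopy hb hb' ht).apply_one).trans hb.apply_one.symm,
    fun t ht => ⟨n, (isZigzagAt_zigzagHomotopy hb hb' ht).isZigzag⟩⟩
  · simp [zigzagHomotopy, hself hb s hs]
  · simp [zigzagHomotopy, hself hb' s hs]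

end ZigzagHomotopy

theorem zigzag_homotopic_iff_length_eq (b b' : ℝ → ℝ) (n n' : ℕ)
    (hb : IsZigzag b n) (hb' : IsZigzag b' n') :
    (∃ K : ℝ → ℝ → ℝ,
      ContinuousOn (fun p : ℝ × ℝ => K p.1 p.2) (Icc 0 1 ×ˢ Icc 0 1) ∧
      (∀ s ∈ Icc (0:ℝ) 1, K s 0 = b s) ∧
      (∀ s ∈ Icc (0:ℝ) 1, K s 1 = b' s) ∧
      (∀ t ∈ Icc (0:ℝ) 1, K 0 t = 0) ∧
      (∀ t ∈ Icc (0:ℝ) 1, K 1 t = b 1) ∧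
      (∀ t ∈ Icc (0:ℝ) 1, ∃ m, IsZigzag (fun s => K s t) m)) ↔ n = n' := by
  show (∃ K, IsZigzagHomotopy K b b') ↔ n = n'
  refine ⟨fun ⟨K, hK⟩ => hK.length_eq hb hb', ?_⟩
  rintro rfl
  rcases isZigzag_iff.1 hb with ⟨rfl, hb0⟩ | ⟨hn, a, ha⟩ <;>
    rcases isZigzag_iff.1 hb' with ⟨hn', hb0'⟩ | ⟨hn', a', ha'⟩
  · exact ⟨fun _ _ => 0, continuousOn_const, fun s hs => (hb0 s hs).symm,
      fun s hs => (hb0' s hs).symm, fun _ _ => rfl, fun _ _ => (hb0 1 ⟨zero_le_one, le_rfl⟩).symm,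
      fun _ _ => ⟨0, isZigzag_iff.2 (.inl ⟨rfl, fun _ _ => rfl⟩)⟩⟩
  · omega
  · omega
  · exact ⟨_, isZigzagHomotopy_zigzagHomotopy ha ha'⟩
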